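/- Fourier transform of the complex-shifted Gaussian: let d ≥ 1, let z ∈ ℂ with Im z > 0, let w ∈ ℂ^d and p ∈ ℝ^d. Then ∫_{ℝ^d} exp(πi·z·∑_{j=1}^d (u_j + w_j)²)·exp(−2πi⟨p,u⟩) du = (−iz)^{−d/2} · exp(−πi‖p‖²·z⁻¹ + 2πi·∑_{j=1}^d p_j w_j). (This is the Fourier coefficient computation in the proof of the theta transformation formula, Theorem 4.7.) -/

import Mathlib

/-!
Put `a = -I z`, so `Re a > 0`. Expanding `(uⱼ + wⱼ)²`, the integrand is a constant times
`exp(-π a ∑ uⱼ² + ∑ cⱼ uⱼ)` with `cⱼ = -2π (a wⱼ + I pⱼ)`, whose integral Mathlib evaluates by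
completing the square as `(π / (π a))^{d/2} exp((∑ cⱼ²) / (4 π a))`. Since `Re a > 0`, `a` is off
the branch cut, so `(a⁻¹)^{d/2} = a^{-d/2}`; the exponents combine to the claimed one.
-/

open Complex Real

section ShiftedGaussian

variable {ι : Type*} [Fintype ι]

lemma cexp_neg_pi_mul_sum_add_sq_mul_cexp (a : ℂ) (w : ι → ℂ) (p u : ι → ℝ) :
    cexp (-π * a * ∑ j, ((u j : ℂ) + w j) ^ 2) * cexp (-(2 * π * I) * ((∑ j, p j * u j : ℝ) : ℂ))
      = cexp (-π * a * ∑ j, w j ^ 2) *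
          cexp (-(π * a) * ∑ j, (u j : ℂ) ^ 2 + ∑ j, -2 * π * (a * w j + I * p j) * u j) := by
  rw [← Complex.exp_add, ← Complex.exp_add]
  congr 1
  push_cast
  simp only [Finset.mul_sum, ← Finset.sum_add_distrib]
  exact Finset.sum_congr rfl fun j _ => by ring

lemma neg_pi_mul_sum_sq_add_sum_sq_div (a : ℂ) (ha : a ≠ 0) (w : ι → ℂ) (p : ι → ℝ) :
    -π * a * ∑ j, w j ^ 2 + (∑ j, (-2 * π * (a * w j + I * p j)) ^ 2) / (4 * (π * a))
      = -π * ((∑ j, p j ^ 2 : ℝ) : ℂ) / a + 2 * π * I * ∑ j, (p j : ℂ) * w j := by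
  have hπ : (π : ℂ) ≠ 0 := ofReal_ne_zero.mpr pi_ne_zero
  push_cast
  simp only [Finset.mul_sum, Finset.sum_div, ← Finset.sum_add_distrib]
  refine Finset.sum_congr rfl fun j _ => ?_
  field_simp
  linear_combination 4 * (p j : ℂ) ^ 2 * I_sq

lemma pi_div_pi_mul_cpow (a s : ℂ) (ha : 0 < a.re) : ((π : ℂ) / (π * a)) ^ s = a ^ (-s) := by
  have hπ : (π : ℂ) ≠ 0 := ofReal_ne_zero.mpr pi_ne_zero
  have harg : a.arg ≠ π := fun h => by linarith [(arg_eq_pi_iff.mp h).1]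
  rw [div_mul_cancel_left₀ hπ, inv_cpow _ _ harg, cpow_neg]

theorem integral_cexp_neg_pi_mul_sum_add_sq_mul_cexp (a : ℂ) (ha : 0 < a.re)
    (w : ι → ℂ) (p : ι → ℝ) :
    ∫ u : ι → ℝ, cexp (-π * a * ∑ j, ((u j : ℂ) + w j) ^ 2) *
        cexp (-(2 * π * I) * ((∑ j, p j * u j : ℝ) : ℂ))
      = a ^ (-(Fintype.card ι : ℂ) / 2) *
          cexp (-π * ((∑ j, p j ^ 2 : ℝ) : ℂ) / a + 2 * π * I * ∑ j, (p j : ℂ) * w j) := by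
  have hπa : 0 < ((π : ℂ) * a).re := by
    simpa [mul_re] using mul_pos pi_pos ha
  simp_rw [cexp_neg_pi_mul_sum_add_sq_mul_cexp, MeasureTheory.integral_const_mul,
    GaussianFourier.integral_cexp_neg_mul_sum_add hπa, pi_div_pi_mul_cpow _ _ ha]
  rw [neg_div, mul_left_comm, ← Complex.exp_add,
    neg_pi_mul_sum_sq_add_sum_sq_div a (fun h => by simp [h] at ha)]

end ShiftedGaussian

theorem shifted_gaussian_fourier_general (d : ℕ)
    (z : ℂ) (hz : 0 < z.im) (w : Fin d → ℂ) (p : Fin d → ℝ) :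
    (∫ u : Fin d → ℝ,
        Complex.exp ((Real.pi : ℂ) * Complex.I * z * ∑ j, ((u j : ℂ) + w j) ^ 2) *
          Complex.exp (-(2 * (Real.pi : ℂ) * Complex.I) * ((∑ j, p j * u j : ℝ) : ℂ)))
      = (-Complex.I * z) ^ (-(d : ℂ) / 2) *
        Complex.exp (-(Real.pi : ℂ) * Complex.I * ((∑ j, (p j) ^ 2 : ℝ) : ℂ) * z⁻¹
          + 2 * (Real.pi : ℂ) * Complex.I * ∑ j, (p j : ℂ) * w j) := by
  have ha : 0 < (-I * z).re := by simpa using hz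
  have h := integral_cexp_neg_pi_mul_sum_add_sq_mul_cexp (-I * z) ha w p
  rw [Fintype.card_fin] at h
  convert h using 4
  · congr 1
    ring
  · rw [div_eq_mul_inv, mul_inv, inv_neg, inv_I, neg_neg]
    ring

/-- **Fourier transform of the complex-shifted Gaussian** (Fourier coefficient computation
in the proof of the theta transformation formula, Theorem 4.7): for `d ≥ 1`, `z ∈ ℂ` with
`Im z > 0`, `w ∈ ℂ^d` and `p ∈ ℝ^d`,
`∫_{ℝ^d} exp(πiz ∑ (uⱼ+wⱼ)²) exp(−2πi⟨p,u⟩) du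
  = (−iz)^{−d/2} exp(−πi‖p‖² z⁻¹ + 2πi ∑ pⱼwⱼ)`. -/
theorem shifted_gaussian_fourier (d : ℕ) (hd : 1 ≤ d)
    (z : ℂ) (hz : 0 < z.im) (w : Fin d → ℂ) (p : Fin d → ℝ) :
    (∫ u : Fin d → ℝ,
        Complex.exp ((Real.pi : ℂ) * Complex.I * z * ∑ j, ((u j : ℂ) + w j) ^ 2) *
          Complex.exp (-(2 * (Real.pi : ℂ) * Complex.I) * ((∑ j, p j * u j : ℝ) : ℂ)))
      = (-Complex.I * z) ^ (-(d : ℂ) / 2) *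
        Complex.exp (-(Real.pi : ℂ) * Complex.I * ((∑ j, (p j) ^ 2 : ℝ) : ℂ) * z⁻¹
          + 2 * (Real.pi : ℂ) * Complex.I * ∑ j, (p j : ℂ) * w j) :=
  shifted_gaussian_fourier_general d z hz w p
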